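/- Candidate set nesting lemma: with blocks of size l and l/2 and δ-bounded-difference matrices A, B, if k'_{l/2} ∈ K_{l/2}(i'_{l/2}, j'_{l/2}) then k'_l ∈ K_l(i'_l, j'_l). That is, the representative for block size l of any candidate at block size l/2 is a candidate at block size l. -/

import Mathlib

/-!
Write `l = 2m`. Passing from a level-`m` representative to the level-`2m` one moves an index
by at most `m`, so by the bounded-difference property an entry of `A` or `B` changes by at most
`δm` per coordinate moved. Hence the level-`2m` cost of `k` exceeds its level-`m` cost by at most
`4δm`, while the level-`m` minimum exceeds the level-`2m` minimum by at most `2δm`, since a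
level-`2m` representative is also a level-`m` one. So the level-`2m` cost of `k` is within
`8δm + 4δm + 2δm ≤ 8δ(2m)` of the level-`2m` minimum.
-/

/-- A matrix (as a function on `Fin n`) is `δ`-bounded-difference if entries at
adjacent positions (differing by 1 in one coordinate) differ by at most `δ`. -/
def BDiff {n : ℕ} (δ : ℤ) (A : Fin n → Fin n → ℤ) : Prop :=
  ∀ i j i' j' : Fin n,
    ((i'.val = i.val + 1 ∧ j' = j) ∨ (i' = i ∧ j'.val = j.val + 1)) →
    |A i' j' - A i j| ≤ δ

/-- Representative (first element) of the length-`m` block containing `i`. -/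
def rep {n : ℕ} (m : ℕ) (i : Fin n) : Fin n :=
  ⟨m * (i.val / m),
    lt_of_le_of_lt (by rw [Nat.mul_comm]; exact Nat.div_mul_le_self _ _) i.isLt⟩

/-- Min-plus product `C = A ⋆ B`. -/
def minplus {n : ℕ} (A B : Fin n → Fin n → ℤ) (i j : Fin n) : ℤ :=
  Finset.inf' Finset.univ ⟨i, Finset.mem_univ i⟩ (fun k => A i k + B k j)

/-- Block-approximate min-plus product: minimum over representative indices. -/
def Ctil {n : ℕ} (m : ℕ) (A B : Fin n → Fin n → ℤ) (i j : Fin n) : ℤ :=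
  Finset.inf' ((Finset.univ : Finset (Fin n)).filter fun k => m ∣ k.val)
    ⟨⟨0, i.pos⟩, by simp⟩ (fun k => A (rep m i) k + B k (rep m j))

/-- Candidate set `K(i',j')`. -/
def Kset {n : ℕ} (m : ℕ) (δ : ℤ) (A B : Fin n → Fin n → ℤ) (i j : Fin n) :
    Finset (Fin n) :=
  Finset.univ.filter
    (fun k => m ∣ k.val ∧
      A (rep m i) k + B k (rep m j) ≤ Ctil m A B i j + 8 * δ * m)

section BoundedDifference

variable {n : ℕ} {δ : ℤ}

theorem abs_sub_le_mul_of_abs_succ_sub_le {f : Fin n → ℤ}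
    (hf : ∀ a b : Fin n, b.val = a.val + 1 → |f b - f a| ≤ δ) (d : ℕ) {a b : Fin n}
    (hab : b.val = a.val + d) : |f b - f a| ≤ δ * d := by
  induction d generalizing b with
  | zero => simp [Fin.ext hab]
  | succ d ih =>
    have hb := b.isLt
    let c : Fin n := ⟨a.val + d, by omega⟩
    calc |f b - f a| ≤ |f b - f c| + |f c - f a| := abs_sub_le _ _ _
      _ ≤ δ + δ * d := add_le_add (hf c b (by simp only [c]; omega)) (ih rfl)
      _ = δ * (d + 1 : ℕ) := by push_cast; ring

variable {A : Fin n → Fin n → ℤ}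

theorem BDiff.abs_sub_le_of_row (hA : BDiff δ A) (j : Fin n) (d : ℕ) {a b : Fin n}
    (hab : b.val = a.val + d) : |A b j - A a j| ≤ δ * d :=
  abs_sub_le_mul_of_abs_succ_sub_le (fun a b h => hA a j b j (Or.inl ⟨h, rfl⟩)) d hab

theorem BDiff.abs_sub_le_of_col (hA : BDiff δ A) (i : Fin n) (d : ℕ) {a b : Fin n}
    (hab : b.val = a.val + d) : |A i b - A i a| ≤ δ * d :=
  abs_sub_le_mul_of_abs_succ_sub_le (fun a b h => hA i a i b (Or.inr ⟨rfl, h⟩)) d hab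

end BoundedDifference

theorem exists_rep_eq_rep_two_mul_add {n : ℕ} (m : ℕ) (i : Fin n) :
    ∃ r ≤ m, (rep m i).val = (rep (2 * m) i).val + r := by
  refine ⟨m * (i.val / m % 2), mul_le_of_le_one_right m.zero_le (by omega), ?_⟩
  change m * (i.val / m) = 2 * m * (i.val / (2 * m)) + m * (i.val / m % 2)
  rw [Nat.mul_comm 2 m, ← Nat.div_div_eq_div_mul]
  nth_rw 1 [← Nat.div_add_mod (i.val / m) 2]
  ring

section Representatives

variable {n : ℕ} {δ : ℤ} {A B : Fin n → Fin n → ℤ}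

theorem BDiff.le_rep_two_mul_add (hA : BDiff δ A) (hδ : 0 ≤ δ) (m : ℕ) (i k : Fin n) :
    A (rep (2 * m) i) (rep (2 * m) k) ≤ A (rep m i) (rep m k) + 2 * δ * m := by
  obtain ⟨r, hr, hi⟩ := exists_rep_eq_rep_two_mul_add m i
  obtain ⟨s, hs, hk⟩ := exists_rep_eq_rep_two_mul_add m k
  have hrow := abs_le.mp (hA.abs_sub_le_of_row (rep (2 * m) k) r hi)
  have hcol := abs_le.mp (hA.abs_sub_le_of_col (rep m i) s hk)
  have hδr : δ * r ≤ δ * m := by gcongr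
  have hδs : δ * s ≤ δ * m := by gcongr
  linarith [hrow.1, hcol.1]

theorem Ctil_le {m : ℕ} {i j k : Fin n} (hk : m ∣ k.val) :
    Ctil m A B i j ≤ A (rep m i) k + B k (rep m j) :=
  Finset.inf'_le _ (by simpa using hk)

theorem exists_Ctil_eq (m : ℕ) (A B : Fin n → Fin n → ℤ) (i j : Fin n) :
    ∃ k : Fin n, m ∣ k.val ∧ Ctil m A B i j = A (rep m i) k + B k (rep m j) := by
  have hne : (Finset.univ.filter fun k : Fin n => m ∣ k.val).Nonempty := ⟨⟨0, i.pos⟩, by simp⟩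
  obtain ⟨k, hk, hmin⟩ := Finset.exists_mem_eq_inf' hne fun k => A (rep m i) k + B k (rep m j)
  exact ⟨k, by simpa using hk, hmin⟩

theorem Ctil_le_Ctil_two_mul_add (hA : BDiff δ A) (hB : BDiff δ B) (hδ : 0 ≤ δ) (m : ℕ)
    (i j : Fin n) : Ctil m A B i j ≤ Ctil (2 * m) A B i j + 2 * δ * m := by
  obtain ⟨k, hk, hmin⟩ := exists_Ctil_eq (2 * m) A B i j
  have hle : Ctil m A B i j ≤ A (rep m i) k + B k (rep m j) := Ctil_le (dvd_of_mul_left_dvd hk)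
  obtain ⟨r, hr, hi⟩ := exists_rep_eq_rep_two_mul_add m i
  obtain ⟨s, hs, hj⟩ := exists_rep_eq_rep_two_mul_add m j
  have hA' := abs_le.mp (hA.abs_sub_le_of_row k r hi)
  have hB' := abs_le.mp (hB.abs_sub_le_of_col k s hj)
  have hδr : δ * r ≤ δ * m := by gcongr
  have hδs : δ * s ≤ δ * m := by gcongr
  linarith [hA'.2, hB'.2]

theorem rep_two_mul_mem_Kset (hA : BDiff δ A) (hB : BDiff δ B) (hδ : 0 ≤ δ) (m : ℕ)
    {i j k : Fin n} (h : rep m k ∈ Kset m δ A B i j) :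
    rep (2 * m) k ∈ Kset (2 * m) δ A B i j := by
  simp only [Kset, Finset.mem_filter, Finset.mem_univ, true_and] at h ⊢
  refine ⟨Dvd.intro _ rfl, ?_⟩
  have hCtil := Ctil_le_Ctil_two_mul_add hA hB hδ m i j
  have hAk := hA.le_rep_two_mul_add hδ m i k
  have hBk := hB.le_rep_two_mul_add hδ m k j
  have hδm : 0 ≤ δ * m := by positivity
  push_cast
  linarith [h.2]

end Representatives

theorem stmt16_general {n : ℕ} (δ : ℤ) (hδ : 0 < δ) (A B : Fin n → Fin n → ℤ)
    (hA : BDiff δ A) (hB : BDiff δ B) (l : ℕ) (h2 : 2 ∣ l)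
    (i j k : Fin n)
    (h : rep (l / 2) k ∈ Kset (l / 2) δ A B i j) :
    rep l k ∈ Kset l δ A B i j := by
  obtain ⟨m, rfl⟩ := h2
  rw [Nat.mul_div_cancel_left m two_pos] at h
  exact rep_two_mul_mem_Kset hA hB hδ.le m h

/-- candidate set nesting: for δ-bounded-difference `A, B` and
block sizes `l`, `l/2`, if the level-`l/2` representative of `k` is in
`K_{l/2}(i'_{l/2}, j'_{l/2})` then the level-`l` representative of `k` is in
`K_l(i'_l, j'_l)`. -/
theorem stmt16 {n : ℕ} (δ : ℤ) (hδ : 0 < δ) (A B : Fin n → Fin n → ℤ)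
    (hA : BDiff δ A) (hB : BDiff δ B) (l : ℕ) (hl : 0 < l) (h2 : 2 ∣ l)
    (hn : l ∣ n) (i j k : Fin n)
    (h : rep (l / 2) k ∈ Kset (l / 2) δ A B i j) :
    rep l k ∈ Kset l δ A B i j :=
  stmt16_general δ hδ A B hA hB l h2 i j k h
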